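/- arXiv:1512.01266 — 6 statements merged into one kernel-verified Lean document; each statement's English description precedes it below -/
import Mathlib

section
/- Let X be a Polish space, T : X → X a continuous map, and Z ⊆ X a zero-dimensional subset with T(Z) ⊆ Z. Then there exists a set Y with Z ⊆ Y ⊆ X, T(Y) ⊆ Y, such that Y is zero-dimensional and is a Gδ subset of X. -/
/-!
Cover `Z`, at every scale `1/(k+1)`, by clopen pieces of `Z` lying in balls of that radius. A clopen
piece and its complement in `Z` are separated sets, so by complete normality they lie in disjoint
open sets `V` and `W`, and `V` may be shrunk into the ball. Countably many pieces suffice at each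
scale. The set `G` of points that lie in some chosen `V` at every scale and in `V ∪ W` for every
chosen pair is a `Gδ` containing `Z`, and the traces of the chosen `V`s form a clopen basis of it.
The points whose forward `T`-orbit stays in `G` form the required invariant set.
-/

/-- A subset of a topological space is zero-dimensional if the clopen sets of the
subspace topology form a basis. -/
def ZeroDimSubset {X : Type*} [TopologicalSpace X] (Z : Set X) : Prop :=
  TopologicalSpace.IsTopologicalBasis {s : Set Z | IsClopen s}

open Set Function Topology TopologicalSpace Metric

section ZeroDimSubset

variable {X : Type*} [TopologicalSpace X]

lemma ZeroDimSubset.mono {Y Z : Set X} (hZ : ZeroDimSubset Z) (hYZ : Y ⊆ Z) :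
    ZeroDimSubset Y :=
  (hZ.isInducing (IsEmbedding.inclusion hYZ).isInducing).isTopologicalBasis_of_exists_subset
    (fun _ hu => hu.isOpen) fun _ ⟨_, hs, hsu⟩ _ hx =>
      ⟨_, hsu ▸ hs.preimage (continuous_inclusion hYZ), hx, subset_rfl⟩

lemma isClopen_preimage_val_of_disjoint {G V W : Set X} (hV : IsOpen V) (hW : IsOpen W)
    (hVW : Disjoint V W) (hG : G ⊆ V ∪ W) : IsClopen ((↑) ⁻¹' V : Set G) := by
  refine isClopen_preimage_val hV (disjoint_left.2 fun x hx hxG => ?_)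
  rw [hV.frontier_eq] at hx
  have hxW : x ∉ W := disjoint_left.1 (hVW.closure_left hW) hx.1
  exact (hG hxG).elim hx.2 hxW

lemma zeroDimSubset_of_forall_mem_nhds {G : Set X}
    (h : ∀ a ∈ G, ∀ t ∈ 𝓝 a, ∃ V W, IsOpen V ∧ IsOpen W ∧ Disjoint V W ∧ G ⊆ V ∪ W ∧
      a ∈ V ∧ V ⊆ t) :
    ZeroDimSubset G := by
  refine isTopologicalBasis_of_isOpen_of_nhds (fun _ hu => hu.isOpen) fun a u hau hu => ?_
  obtain ⟨t, ht, rfl⟩ := isOpen_induced_iff.1 hu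
  obtain ⟨V, W, hV, hW, hVW, hG, haV, hVt⟩ := h a a.2 t (ht.mem_nhds hau)
  exact ⟨_, isClopen_preimage_val_of_disjoint hV hW hVW hG, haV, preimage_mono hVt⟩

lemma disjoint_closure_image_val_compl {Z : Set X} {w : Set Z} (hw : IsClosed w) :
    Disjoint (closure ((↑) '' w)) ((↑) '' wᶜ : Set X) := by
  refine disjoint_left.2 ?_
  rintro _ hx ⟨y, hy, rfl⟩
  exact hy (hw.closure_eq ▸ closure_subtype.2 hx)

lemma IsClopen.separatedNhds_image_val [CompletelyNormalSpace X] {Z : Set X} {u : Set Z}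
    (hu : IsClopen u) : SeparatedNhds ((↑) '' u : Set X) ((↑) '' uᶜ) := by
  have hcompl := disjoint_closure_image_val_compl hu.compl.isClosed
  rw [compl_compl] at hcompl
  exact separatedNhds_iff_disjoint.2 <|
    completely_normal (disjoint_closure_image_val_compl hu.isClosed) hcompl.symm

end ZeroDimSubset

lemma ZeroDimSubset.exists_separation_subset_ball {X : Type*} [PseudoMetricSpace X] {Z : Set X}
    (hZ : ZeroDimSubset Z) (z : Z) {r : ℝ} (hr : 0 < r) :
    ∃ V W, IsOpen V ∧ IsOpen W ∧ Disjoint V W ∧ Z ⊆ V ∪ W ∧ (z : X) ∈ V ∧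
      V ⊆ ball (z : X) r := by
  obtain ⟨u, hu, hzu, hub⟩ := hZ.exists_subset_of_mem_open (u := (↑) ⁻¹' ball (z : X) r)
    (mem_ball_self hr) (isOpen_ball.preimage continuous_subtype_val)
  obtain ⟨V, W, hV, hW, huV, huW, hVW⟩ := hu.separatedNhds_image_val
  refine ⟨V ∩ ball z r, W, hV.inter isOpen_ball, hW, hVW.mono_left inter_subset_left,
    fun x hx => ?_, ⟨huV (mem_image_of_mem _ hzu), mem_ball_self hr⟩, inter_subset_right⟩
  by_cases hxu : ⟨x, hx⟩ ∈ u
  · exact Or.inl ⟨huV ⟨_, hxu, rfl⟩, hub hxu⟩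
  · exact Or.inr (huW ⟨_, hxu, rfl⟩)

theorem ZeroDimSubset.exists_isGδ_superset {X : Type*} [TopologicalSpace X]
    [PseudoMetrizableSpace X] [SecondCountableTopology X] {Z : Set X} (hZ : ZeroDimSubset Z) :
    ∃ G, Z ⊆ G ∧ ZeroDimSubset G ∧ IsGδ G := by
  let := pseudoMetrizableSpacePseudoMetric X
  choose V W hV hW hVW hZVW hzV hVball using fun (k : ℕ) (z : Z) =>
    hZ.exists_separation_subset_ball z (r := 1 / (k + 1)) Nat.one_div_pos_of_nat
  choose C hC hCV using fun k => isOpen_iUnion_countable (V k) (hV k)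
  refine ⟨⋂ k, (⋃ z ∈ C k, V k z) ∩ ⋂ z ∈ C k, V k z ∪ W k z, ?_, ?_, ?_⟩
  · intro x hx
    refine mem_iInter.2 fun k => ⟨?_, mem_iInter₂.2 fun z _ => hZVW k z hx⟩
    rw [hCV k]
    exact mem_iUnion.2 ⟨⟨x, hx⟩, hzV k _⟩
  · refine zeroDimSubset_of_forall_mem_nhds fun a ha t ht => ?_
    obtain ⟨ε, hε, hεt⟩ := Metric.mem_nhds_iff.1 ht
    obtain ⟨k, hk⟩ := exists_nat_one_div_lt (half_pos hε)
    obtain ⟨z, hz, haz⟩ := mem_iUnion₂.1 (mem_iInter.1 ha k).1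
    refine ⟨V k z, W k z, hV k z, hW k z, hVW k z,
      fun b hb => mem_iInter₂.1 (mem_iInter.1 hb k).2 z hz, haz, ?_⟩
    have hza : dist (z : X) a < 1 / (k + 1) := mem_ball'.1 (hVball k z haz)
    exact (hVball k z).trans ((ball_subset_ball' (by linarith)).trans hεt)
  · exact .iInter fun k => .inter (isOpen_biUnion fun z _ => hV k z).isGδ
      (.biInter (hC k) fun z _ => ((hV k z).union (hW k z)).isGδ)

lemma mapsTo_iInter_preimage_iterate {α : Type*} (T : α → α) (G : Set α) :
    MapsTo T (⋂ n, T^[n] ⁻¹' G) (⋂ n, T^[n] ⁻¹' G) :=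
  fun x hx => mem_iInter.2 fun n => by
    simpa only [mem_preimage, iterate_succ_apply] using mem_iInter.1 hx (n + 1)

lemma Set.MapsTo.subset_iInter_preimage_iterate {α : Type*} {T : α → α} {G Z : Set α}
    (hT : MapsTo T Z Z) (hZG : Z ⊆ G) : Z ⊆ ⋂ n, T^[n] ⁻¹' G :=
  fun _ hz => mem_iInter.2 fun n => hZG (hT.iterate n hz)

theorem zero_dim_invariant_Gdelta_extension
    {X : Type*} [TopologicalSpace X] [PolishSpace X]
    (T : X → X) (hT : Continuous T)
    (Z : Set X) (hZ : ZeroDimSubset Z) (hTZ : T '' Z ⊆ Z) :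
    ∃ Y : Set X, Z ⊆ Y ∧ T '' Y ⊆ Y ∧ ZeroDimSubset Y ∧ IsGδ Y := by
  obtain ⟨G, hZG, hG, hGδ⟩ := hZ.exists_isGδ_superset
  refine ⟨⋂ n, T^[n] ⁻¹' G, (mapsTo_iff_image_subset.2 hTZ).subset_iInter_preimage_iterate hZG,
    (mapsTo_iInter_preimage_iterate T G).image_subset, hG.mono (iInter_subset _ 0),
    .iInter fun n => hGδ.preimage (hT.iterate n)⟩
end

section
/- Let X be a perfect Polish space and T : X → X continuous. Then there exists a dense subset X₀ ⊆ X which is Polish (i.e. Gδ in X), nowhere locally compact, and satisfies T(X₀) ⊆ X₀. -/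
/-!
If every fibre `T^[n] ⁻¹' {e}` is nowhere dense, removing the backward orbit of `e` leaves a dense
`Gδ` (Baire) that `T` maps into itself. The values `e` with a fibre of nonempty interior are
countably many (disjoint open sets in a separable space), so in a perfect space the remaining values
are dense, and we remove the backward orbits of a countable dense set `E` of them. The resulting
`X₀` is dense with dense complement (it misses `E`); a subset of `X₀` that is closed in `X` then
has empty interior in `X₀`, so no point of `X₀` has a compact neighbourhood.
-/

open Set Function Topology TopologicalSpace

theorem Set.mapsTo_compl_iUnion_preimage_iterate {X : Type*} (f : X → X) (s : Set X) :
    MapsTo f (⋃ n, f^[n] ⁻¹' s)ᶜ (⋃ n, f^[n] ⁻¹' s)ᶜ := by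
  intro x hx hfx
  obtain ⟨n, hn⟩ := mem_iUnion.1 hfx
  exact hx (mem_iUnion.2 ⟨n + 1, by rwa [mem_preimage, iterate_succ_apply]⟩)

section

variable {X : Type*} [TopologicalSpace X]

theorem countable_setOf_interior_preimage_singleton_nonempty {Y : Type*} [SeparableSpace X]
    (f : X → Y) : {y | (interior (f ⁻¹' {y})).Nonempty}.Countable :=
  (pairwiseDisjoint_fiber f _).countable_of_nonempty_interior fun _ hy => hy

theorem Set.Countable.dense_compl_of_baireSpace [BaireSpace X] [T1Space X]
    [∀ x : X, (𝓝[≠] x).NeBot] {s : Set X} (hs : s.Countable) : Dense sᶜ := by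
  have hs_eq : sᶜ = ⋂ x ∈ s, {x}ᶜ := by
    rw [← compl_iUnion₂, biUnion_of_singleton]
  rw [hs_eq]
  exact dense_biInter_of_isOpen (fun _ _ => isOpen_compl_singleton) hs
    fun x _ => dense_compl_singleton x

theorem exists_countable_dense_forall_interior_preimage_iterate_eq_empty [BaireSpace X]
    [T1Space X] [PerfectSpace X] [SecondCountableTopology X] (T : X → X) :
    ∃ E : Set X, E.Countable ∧ Dense E ∧ ∀ e ∈ E, ∀ n, interior (T^[n] ⁻¹' {e}) = ∅ := by
  set B := ⋃ n, {e | (interior (T^[n] ⁻¹' {e})).Nonempty}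
  have hB : B.Countable :=
    countable_iUnion fun n => countable_setOf_interior_preimage_singleton_nonempty T^[n]
  obtain ⟨E, hEB, hEc, hEd⟩ := hB.dense_compl_of_baireSpace.exists_countable_dense_subset
  refine ⟨E, hEc, hEd, fun e he n => ?_⟩
  have he' : e ∉ B := hEB he
  simp only [B, mem_iUnion, mem_ofPred_eq, not_exists, not_nonempty_iff_eq_empty] at he'
  exact he' n

theorem Continuous.dense_preimage_compl_of_countable [BaireSpace X] {Y : Type*}
    [TopologicalSpace Y] [T1Space Y] {g : X → Y} (hg : Continuous g) {s : Set Y}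
    (hs : s.Countable) (hfib : ∀ y ∈ s, interior (g ⁻¹' {y}) = ∅) : Dense (g ⁻¹' sᶜ) := by
  have h_eq : g ⁻¹' sᶜ = ⋂ y ∈ s, (g ⁻¹' {y})ᶜ := by
    simp_rw [← preimage_compl, ← preimage_iInter₂, ← compl_iUnion₂, biUnion_of_singleton]
  rw [h_eq]
  exact dense_biInter_of_isOpen (fun y _ => (isClosed_singleton.preimage hg).isOpen_compl) hs
    fun y hy => interior_eq_empty_iff_dense_compl.1 (hfib y hy)

theorem Dense.not_exists_isCompact_mem_nhds_of_dense_compl [T2Space X] {s : Set X}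
    (hs : Dense s) (hs' : Dense sᶜ) (x : s) : ¬ ∃ K : Set s, K ∈ 𝓝 x ∧ IsCompact K := by
  rintro ⟨K, hKx, hK⟩
  have hK_closed : IsClosed (Subtype.val '' K) := (hK.image continuous_subtype_val).isClosed
  obtain ⟨t, ht, htK⟩ := (mem_nhds_subtype s x K).1 hKx
  obtain ⟨U, hUt, hU, hxU⟩ := mem_nhds_iff.1 ht
  have hUK : U ⊆ Subtype.val '' K := by
    refine (hs.open_subset_closure_inter hU).trans (hK_closed.closure_subset_iff.2 ?_)
    rintro y ⟨hyU, hys⟩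
    exact ⟨⟨y, hys⟩, htK (hUt hyU), rfl⟩
  obtain ⟨y, hyU, hys⟩ := hs'.inter_open_nonempty U hU ⟨x, hxU⟩
  obtain ⟨z, -, rfl⟩ := hUK hyU
  exact hys z.2

end

theorem dense_invariant_nowhere_locally_compact_subset
    {X : Type*} [TopologicalSpace X] [PolishSpace X] [PerfectSpace X]
    (T : X → X) (hT : Continuous T) :
    ∃ X₀ : Set X, Dense X₀ ∧ IsGδ X₀ ∧ T '' X₀ ⊆ X₀ ∧
      ∀ x : X₀, ¬ ∃ K : Set X₀, K ∈ nhds x ∧ IsCompact K := by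
  obtain ⟨E, hEc, hEd, hEfib⟩ := exists_countable_dense_forall_interior_preimage_iterate_eq_empty T
  set X₀ := (⋃ n, T^[n] ⁻¹' E)ᶜ
  have hX₀_eq : X₀ = ⋂ n, T^[n] ⁻¹' Eᶜ := by
    simp only [X₀, compl_iUnion, preimage_compl]
  have hGδ : ∀ n, IsGδ (T^[n] ⁻¹' Eᶜ) := fun n => hEc.isGδ_compl.preimage (hT.iterate n)
  have hX₀d : Dense X₀ := hX₀_eq ▸ dense_iInter_of_Gδ hGδ fun n =>
    (hT.iterate n).dense_preimage_compl_of_countable hEc fun e he => hEfib e he n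
  have hX₀cd : Dense X₀ᶜ := by
    rw [compl_compl]
    exact hEd.mono (subset_iUnion (fun n => T^[n] ⁻¹' E) 0)
  exact ⟨X₀, hX₀d, hX₀_eq ▸ .iInter hGδ,
    (mapsTo_compl_iUnion_preimage_iterate T E).image_subset,
    hX₀d.not_exists_isCompact_mem_nhds_of_dense_compl hX₀cd⟩
end

section
/- There exists a bounded linear operator U : ℓ¹ → ℓ¹ with ‖U‖ = 1 such that for every separable Banach space X, every bounded linear operator T : X → X with ‖T‖ ≤ 1 is a linear factor of U; i.e., there exists a surjective bounded linear operator π : ℓ¹ → X with π ∘ U = T ∘ π. -/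
noncomputable local instance : Fact ((1 : ENNReal) ≤ 1) := ⟨le_rfl⟩

/-!
Identify `ℕ` with `ℕ × ℕ` through `Nat.pair` and let `U` send the unit vector `e (m, k)` to
`e (m, k + 1)`: a countable `ℓ¹`-sum of unilateral shifts. Given a contraction `T` of a separable
Banach space `X`, choose `x m` dense in the closed unit ball and let `π` send `e (m, k)` to
`T^k (x m)`. Then `π` is a contraction with `π ∘ U = T ∘ π`, and the image of the unit ball of
`ℓ¹` under `π` is dense in the unit ball of `X`; the successive approximation argument from the
proof of the open mapping theorem upgrades this to surjectivity.
-/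

open Filter Topology Function Metric
open scoped lp

section ApproxPreimage

variable {𝕜 E F : Type*} [NormedField 𝕜] [NormedAddCommGroup E] [NormedSpace 𝕜 E]
  [CompleteSpace E] [NormedAddCommGroup F] [NormedSpace 𝕜 F]

theorem ContinuousLinearMap.surjective_of_approx_preimage (f : E →L[𝕜] F) {C : ℝ} (hC : 0 ≤ C)
    (h : ∀ y, ∃ x, ‖x‖ ≤ C * ‖y‖ ∧ ‖y - f x‖ ≤ ‖y‖ / 2) : Surjective f := by
  intro y
  choose pre hpre_norm hpre_approx using h
  set r : ℕ → F := fun n => (fun z => z - f (pre z))^[n] y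
  have hr_succ (n : ℕ) : r (n + 1) = r n - f (pre (r n)) := iterate_succ_apply' _ n y
  have hr_le (n : ℕ) : ‖r n‖ ≤ ‖y‖ * (1 / 2) ^ n := by
    induction n with
    | zero => simp [r]
    | succ n ih => rw [hr_succ, pow_succ]; linarith [hpre_approx (r n)]
  have hr_lim : Tendsto r atTop (𝓝 0) :=
    squeeze_zero_norm hr_le <| by
      simpa using (tendsto_pow_atTop_nhds_zero_of_lt_one (r := (1 / 2 : ℝ))
        (by norm_num) (by norm_num)).const_mul ‖y‖
  have hsum : Summable fun n => pre (r n) := by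
    refine .of_norm_bounded (summable_geometric_two.mul_left (C * ‖y‖)) fun n => ?_
    calc ‖pre (r n)‖ ≤ C * ‖r n‖ := hpre_norm _
      _ ≤ C * (‖y‖ * (1 / 2) ^ n) := by gcongr; exact hr_le n
      _ = C * ‖y‖ * (1 / 2) ^ n := by ring
  have hpartial (N : ℕ) : f (∑ n ∈ Finset.range N, pre (r n)) = y - r N := by
    induction N with
    | zero => simp [r]
    | succ N ih => rw [Finset.sum_range_succ, map_add, ih, hr_succ]; abel
  refine ⟨∑' n, pre (r n), tendsto_nhds_unique
    ((f.continuous.tendsto _).comp hsum.hasSum.tendsto_sum_nat) ?_⟩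
  simpa [comp_def, hpartial] using (tendsto_const_nhds (x := y)).sub hr_lim

end ApproxPreimage

namespace lp

variable {ι 𝕜 E X : Type*}

section Norm

variable [NormedAddCommGroup E]

theorem summable_norm_of_one (f : ℓ¹(ι, E)) : Summable fun i => ‖f i‖ := by
  simpa using (lp.memℓp f).summable (p := 1) (by norm_num)

theorem norm_eq_tsum_norm_of_one (f : ℓ¹(ι, E)) : ‖f‖ = ∑' i, ‖f i‖ := by
  simpa using lp.norm_eq_tsum_rpow (p := 1) (by norm_num) f

end Norm

section Lift

variable [NontriviallyNormedField 𝕜] [NormedAddCommGroup X] [NormedSpace 𝕜 X]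

theorem summable_norm_smul_of_norm_le_one {g : ι → X} (hg : ∀ i, ‖g i‖ ≤ 1)
    (f : ℓ¹(ι, 𝕜)) : Summable fun i => ‖f i • g i‖ :=
  .of_nonneg_of_le (fun _ => norm_nonneg _)
    (fun i => (norm_smul_le _ _).trans (mul_le_of_le_one_right (norm_nonneg _) (hg i)))
    (summable_norm_of_one f)

variable [CompleteSpace X]

noncomputable def l1Lift (g : ι → X) (hg : ∀ i, ‖g i‖ ≤ 1) : ℓ¹(ι, 𝕜) →L[𝕜] X :=
  LinearMap.mkContinuous
    { toFun := fun f => ∑' i, f i • g i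
      map_add' := fun f f' => by
        simp only [coeFn_add, Pi.add_apply, add_smul]
        exact (summable_norm_smul_of_norm_le_one hg f).of_norm.tsum_add
          (summable_norm_smul_of_norm_le_one hg f').of_norm
      map_smul' := fun c f => by
        simp only [coeFn_smul, Pi.smul_apply, smul_eq_mul, mul_smul, RingHom.id_apply]
        exact (summable_norm_smul_of_norm_le_one hg f).of_norm.tsum_const_smul c }
    1 fun f => by
      have hs := summable_norm_smul_of_norm_le_one hg f
      calc ‖∑' i, f i • g i‖ ≤ ∑' i, ‖f i • g i‖ := norm_tsum_le_tsum_norm hs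
        _ ≤ ∑' i, ‖f i‖ := hs.tsum_le_tsum
            (fun i => (norm_smul_le _ _).trans (mul_le_of_le_one_right (norm_nonneg _) (hg i)))
            (summable_norm_of_one f)
        _ = 1 * ‖f‖ := by rw [one_mul, norm_eq_tsum_norm_of_one]

variable {g : ι → X} {hg : ∀ i, ‖g i‖ ≤ 1}

theorem norm_l1Lift_le : ‖(l1Lift g hg : ℓ¹(ι, 𝕜) →L[𝕜] X)‖ ≤ 1 :=
  LinearMap.mkContinuous_norm_le _ zero_le_one _

@[simp]
theorem l1Lift_single [DecidableEq ι] (i : ι) (c : 𝕜) :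
    l1Lift g hg (lp.single 1 i c : ℓ¹(ι, 𝕜)) = c • g i := by
  show ∑' j, (lp.single 1 i c : ℓ¹(ι, 𝕜)) j • g j = c • g i
  rw [tsum_eq_single i fun j hj => by rw [lp.single_apply_ne _ _ _ hj, zero_smul],
    lp.single_apply_self]

variable [CompleteSpace 𝕜] [DecidableEq ι]

noncomputable def l1MapDomain (σ : ι → ι) : ℓ¹(ι, 𝕜) →L[𝕜] ℓ¹(ι, 𝕜) :=
  l1Lift (fun i => (lp.single 1 (σ i) (1 : 𝕜) : ℓ¹(ι, 𝕜))) fun i => by simp [lp.norm_single]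

@[simp]
theorem l1MapDomain_single (σ : ι → ι) (i : ι) (c : 𝕜) :
    l1MapDomain σ (lp.single 1 i c : ℓ¹(ι, 𝕜)) = lp.single 1 (σ i) c := by
  simp [l1MapDomain, ← lp.single_smul]

theorem norm_l1MapDomain [Nonempty ι] (σ : ι → ι) : ‖(l1MapDomain σ : ℓ¹(ι, 𝕜) →L[𝕜] _)‖ = 1 := by
  refine le_antisymm norm_l1Lift_le ?_
  obtain ⟨i⟩ := ‹Nonempty ι›
  simpa [lp.norm_single] using (l1MapDomain σ).le_opNorm (lp.single 1 i (1 : 𝕜) : ℓ¹(ι, 𝕜))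

theorem l1Lift_comp_l1MapDomain {σ : ι → ι} {T : X →L[𝕜] X} (hgσ : ∀ i, g (σ i) = T (g i)) :
    (l1Lift g hg).comp (l1MapDomain σ) = T.comp (l1Lift g hg : ℓ¹(ι, 𝕜) →L[𝕜] X) :=
  lp.ext_continuousLinearMap ENNReal.one_ne_top fun i =>
    ContinuousLinearMap.ext fun c => by simp [hgσ]

end Lift

section RCLike

variable [RCLike 𝕜] [NormedAddCommGroup X] [NormedSpace 𝕜 X] [CompleteSpace X]
  {g : ι → X} {hg : ∀ i, ‖g i‖ ≤ 1}

theorem l1Lift_surjective_of_half_net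
    (hnet : ∀ y : X, ‖y‖ ≤ 1 → ∃ i, ‖y - g i‖ ≤ 1 / 2) :
    Surjective (l1Lift g hg : ℓ¹(ι, 𝕜) →L[𝕜] X) := by
  classical
  refine ContinuousLinearMap.surjective_of_approx_preimage _ zero_le_one fun y => ?_
  rcases eq_or_ne y 0 with rfl | hy
  · exact ⟨0, by simp, by simp⟩
  have hy' : (‖y‖ : 𝕜) ≠ 0 := by simpa using hy
  obtain ⟨i, hi⟩ := hnet ((‖y‖ : 𝕜)⁻¹ • y) (by simp [norm_smul, hy])
  refine ⟨lp.single 1 i (‖y‖ : 𝕜), by simp [lp.norm_single], ?_⟩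
  calc ‖y - l1Lift g hg (lp.single 1 i (‖y‖ : 𝕜))‖
      = ‖(‖y‖ : 𝕜) • ((‖y‖ : 𝕜)⁻¹ • y - g i)‖ := by
        rw [l1Lift_single, smul_sub, smul_inv_smul₀ hy']
    _ = ‖y‖ * ‖(‖y‖ : 𝕜)⁻¹ • y - g i‖ := by rw [norm_smul]; simp
    _ ≤ ‖y‖ * (1 / 2) := by gcongr
    _ = ‖y‖ / 2 := by ring

end RCLike

end lp

theorem ContinuousLinearMap.norm_iterate_apply_le {𝕜 E : Type*} [NontriviallyNormedField 𝕜]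
    [NormedAddCommGroup E] [NormedSpace 𝕜 E] {T : E →L[𝕜] E} (hT : ‖T‖ ≤ 1) (n : ℕ) (x : E) :
    ‖T^[n] x‖ ≤ ‖x‖ := by
  induction n with
  | zero => rfl
  | succ n ih =>
    rw [iterate_succ_apply']
    exact (T.le_of_opNorm_le hT _).trans (by rwa [one_mul])

theorem exists_dense_seq_closedBall_zero_one (E : Type*) [SeminormedAddCommGroup E]
    [TopologicalSpace.SeparableSpace E] :
    ∃ x : ℕ → E, (∀ m, ‖x m‖ ≤ 1) ∧ ∀ y, ‖y‖ ≤ 1 → ∀ ε > 0, ∃ m, ‖y - x m‖ < ε := by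
  have : TopologicalSpace.SeparableSpace (closedBall (0 : E) 1) :=
    (TopologicalSpace.IsSeparable.of_separableSpace _).separableSpace
  have : Nonempty (closedBall (0 : E) 1) := ⟨⟨0, mem_closedBall_self zero_le_one⟩⟩
  refine ⟨fun m => TopologicalSpace.denseSeq (closedBall (0 : E) 1) m,
    fun m => mem_closedBall_zero_iff.1 (TopologicalSpace.denseSeq (closedBall (0 : E) 1) m).2,
    fun y hy ε hε => ?_⟩
  obtain ⟨m, hm⟩ := (TopologicalSpace.denseRange_denseSeq _).exists_dist_lt
    (⟨y, mem_closedBall_zero_iff.2 hy⟩ : closedBall (0 : E) 1) hε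
  exact ⟨m, by rwa [Subtype.dist_eq, dist_eq_norm] at hm⟩

def pairSuccSnd (n : ℕ) : ℕ := Nat.pair n.unpair.1 (n.unpair.2 + 1)

@[simp]
theorem unpair_pairSuccSnd (n : ℕ) : (pairSuccSnd n).unpair = (n.unpair.1, n.unpair.2 + 1) :=
  Nat.unpair_pair _ _

theorem universal_operator_on_l1 :
    ∃ U : lp (fun _ : ℕ => ℝ) 1 →L[ℝ] lp (fun _ : ℕ => ℝ) 1, ‖U‖ = 1 ∧
      ∀ (X : Type) [NormedAddCommGroup X] [NormedSpace ℝ X] [CompleteSpace X]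
        [TopologicalSpace.SeparableSpace X] (T : X →L[ℝ] X), ‖T‖ ≤ 1 →
        ∃ π : lp (fun _ : ℕ => ℝ) 1 →L[ℝ] X,
          Function.Surjective π ∧ ∀ v, π (U v) = T (π v) := by
  refine ⟨lp.l1MapDomain pairSuccSnd, lp.norm_l1MapDomain _, fun X _ _ _ _ T hT => ?_⟩
  obtain ⟨x, hx_norm, hx_dense⟩ := exists_dense_seq_closedBall_zero_one X
  set g : ℕ → X := fun n => T^[n.unpair.2] (x n.unpair.1)
  have hg (n : ℕ) : ‖g n‖ ≤ 1 := (T.norm_iterate_apply_le hT _ _).trans (hx_norm _)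
  have hnet (y : X) (hy : ‖y‖ ≤ 1) : ∃ n, ‖y - g n‖ ≤ 1 / 2 := by
    obtain ⟨m, hm⟩ := hx_dense y hy (1 / 2) (by norm_num)
    exact ⟨Nat.pair m 0, by simpa [g] using hm.le⟩
  have hgσ (n : ℕ) : g (pairSuccSnd n) = T (g n) := by simp [g, iterate_succ_apply']
  exact ⟨lp.l1Lift g hg, lp.l1Lift_surjective_of_half_net hnet,
    fun v => congr($(lp.l1Lift_comp_l1MapDomain hgσ) v)⟩
end

section
/- There is no compact metrizable dynamical system (E, U) such that every rotation R_g : 𝕋 → 𝕋, g ∈ 𝕋, of the circle is a factor of (E, U). -/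
/-!
By compactness and metrizability some orbit has a convergent subsequence `U^[φ k] x₀`. A factor
map `π` onto the rotation by `g` sends `U^[n] x₀` to `g ^ n * π x₀`, so `g ^ φ k` would converge for
every `g ∈ 𝕋`. Then `g ^ (φ (k + 1) - φ k) → 1` for every `g`, i.e. the characters `z ↦ z ^ m` with
these nonzero exponents tend to `1` pointwise; by dominated convergence their integrals, all `0`,
would tend to `∫ 1 = 1`.
-/

open Filter MeasureTheory AddCircle Topology

lemma fourier_eq_toCircle_zpow {T : ℝ} (n : ℤ) (x : AddCircle T) :
    fourier n x = ((toCircle x ^ n : Circle) : ℂ) := by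
  rw [fourier_apply, toCircle_zsmul]

theorem Circle.not_forall_tendsto_zpow_one {m : ℕ → ℤ} (hm : ∀ k, m k ≠ 0) :
    ¬ ∀ g : Circle, Tendsto (fun k => g ^ m k) atTop (𝓝 1) := by
  intro h
  have : Fact (0 < (1 : ℝ)) := ⟨one_pos⟩
  have hpointwise : ∀ x : AddCircle (1 : ℝ),
      Tendsto (fun k => fourier (m k) x) atTop (𝓝 1) := by
    intro x
    exact ((continuous_subtype_val.tendsto 1).comp (h (toCircle x))).congr fun k =>
      (fourier_eq_toCircle_zpow _ _).symm
  have hmean_zero : ∀ k, ∫ x : AddCircle (1 : ℝ), fourier (m k) x ∂haarAddCircle = 0 := fun k =>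
    integral_eq_zero_of_add_right_eq_neg (fourier_add_half_inv_index (hm k) one_pos)
  have hlimit : Tendsto (fun k => ∫ x : AddCircle (1 : ℝ), fourier (m k) x ∂haarAddCircle)
      atTop (𝓝 (∫ _ : AddCircle (1 : ℝ), (1 : ℂ) ∂haarAddCircle)) :=
    tendsto_integral_of_dominated_convergence (fun _ => 1)
      (fun k => (fourier (m k)).continuous.aestronglyMeasurable) (integrable_const 1)
      (fun k => Eventually.of_forall fun x => (Circle.norm_coe _).le)
      (Eventually.of_forall hpointwise)
  simp only [hmean_zero, integral_const, probReal_univ, one_smul] at hlimit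
  exact zero_ne_one (tendsto_nhds_unique tendsto_const_nhds hlimit)

theorem Circle.not_forall_exists_tendsto_pow {φ : ℕ → ℕ} (hφ : StrictMono φ) :
    ¬ ∀ g : Circle, ∃ l : Circle, Tendsto (fun k => g ^ φ k) atTop (𝓝 l) := by
  intro h
  refine Circle.not_forall_tendsto_zpow_one (m := fun k => (φ (k + 1) : ℤ) - φ k)
    (fun k => sub_ne_zero.mpr (by exact_mod_cast (hφ k.lt_succ_self).ne')) fun g => ?_
  obtain ⟨l, hl⟩ := h g
  have hgap : Tendsto (fun k => g ^ φ (k + 1) * (g ^ φ k)⁻¹) atTop (𝓝 (l * l⁻¹)) :=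
    (hl.comp (tendsto_add_atTop_nat 1)).mul hl.inv
  rw [mul_inv_cancel] at hgap
  simpa only [zpow_sub, zpow_natCast, div_eq_mul_inv] using hgap

theorem no_compact_metrizable_common_extension_of_rotations :
    ∀ (E : Type*) [TopologicalSpace E] [CompactSpace E]
      [TopologicalSpace.MetrizableSpace E] (U : E → E), Continuous U →
      ¬ ∀ g : Circle, ∃ π : E → Circle, Continuous π ∧ Function.Surjective π ∧
          (fun x => g * x) ∘ π = π ∘ U := by
  intro E _ _ _ U _ h
  obtain ⟨π₁, -, hsurj, -⟩ := h 1
  obtain ⟨x₀, -⟩ := hsurj 1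
  obtain ⟨y, φ, hφ, hconv⟩ := SeqCompactSpace.tendsto_subseq fun k => U^[k] x₀
  refine Circle.not_forall_exists_tendsto_pow hφ fun g => ?_
  obtain ⟨π, hπc, -, hπ⟩ := h g
  have hsemiconj : Function.Semiconj π U (g * ·) := fun x => (congrFun hπ x).symm
  have horbit : ∀ n, π (U^[n] x₀) = g ^ n * π x₀ := fun n => by
    rw [(hsemiconj.iterate_right n).eq, mul_left_iterate]
  refine ⟨π y * (π x₀)⁻¹, ?_⟩
  simpa only [Function.comp_apply, horbit, mul_inv_cancel_right] using
    ((hπc.tendsto y).comp hconv).mul_const (π x₀)⁻¹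
end

section
/- Let (X,d) be a compact metric space and 𝒩 a compact subset of C(X,X) (sup metric) such that every S ∈ 𝒩 is 1-Lipschitz, has a unique fixed point α(S) ∈ X, and Sⁱ(x) → α(S) as i → ∞ for every x ∈ X. Then 𝒩 has uniformly controlled powers: whenever S_k → S in 𝒩, the iterates satisfy sup_{x∈X, i≥0} d(S_kⁱ(x), Sⁱ(x)) → 0 as k → ∞. -/
open Filter Metric

private lemma iter_lip' {X : Type*} [MetricSpace X] {S : X → X} (hl : LipschitzWith 1 S)
    (n : ℕ) : LipschitzWith 1 (S^[n]) := by
  simpa using hl.iterate n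

private lemma iter_dist' {X : Type*} [MetricSpace X] {T S : X → X}
    (hS : LipschitzWith 1 S) {δ : ℝ}
    (hδ : ∀ y, dist (T y) (S y) ≤ δ) (i : ℕ) (x : X) :
    dist (T^[i] x) (S^[i] x) ≤ i * δ := by
  induction i with
  | zero => simp
  | succ n ih =>
    rw [Function.iterate_succ_apply', Function.iterate_succ_apply']
    calc dist (T (T^[n] x)) (S (S^[n] x))
        ≤ dist (T (T^[n] x)) (S (T^[n] x)) + dist (S (T^[n] x)) (S (S^[n] x)) :=
          dist_triangle _ _ _
      _ ≤ δ + n * δ := add_le_add (hδ _)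
          (le_trans (by simpa using hS.dist_le_mul (T^[n] x) (S^[n] x)) ih)
      _ = (n + 1 : ℕ) * δ := by push_cast; ring

private lemma unif_conv' {X : Type*} [MetricSpace X] [CompactSpace X] {S : X → X}
    (hScont : Continuous S) (hl : LipschitzWith 1 S) {a : X} (ha : S a = a)
    (h : ∀ x, Tendsto (fun i => S^[i] x) atTop (nhds a)) {ε : ℝ} (hε : 0 < ε) :
    ∃ N : ℕ, ∀ x : X, ∀ i ≥ N, dist (S^[i] x) a < ε := by
  have hfa : ∀ n, S^[n] a = a := fun n => Function.iterate_fixed ha n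
  have hmono : ∀ (x : X) (i j : ℕ), i ≤ j → dist (S^[j] x) a ≤ dist (S^[i] x) a := by
    intro x i j hij
    obtain ⟨k, rfl⟩ := Nat.exists_eq_add_of_le hij
    rw [add_comm, Function.iterate_add_apply]
    calc dist (S^[k] (S^[i] x)) a = dist (S^[k] (S^[i] x)) (S^[k] a) := by rw [hfa]
      _ ≤ dist (S^[i] x) a := by simpa using (iter_lip' hl k).dist_le_mul (S^[i] x) a
  choose N hN using fun x => Metric.tendsto_atTop.mp (h x) (ε / 2) (by linarith)
  obtain ⟨t, ht⟩ := isCompact_univ.elim_finite_subcover (fun x : X => ball x (ε / 2))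
    (fun x => isOpen_ball) (fun y _ => Set.mem_iUnion.mpr ⟨y, mem_ball_self (by linarith)⟩)
  refine ⟨t.sup N, fun y i hi => ?_⟩
  obtain ⟨x, hxt, hyx⟩ := Set.mem_iUnion₂.mp (ht (Set.mem_univ y))
  have hNx : N x ≤ i := le_trans (Finset.le_sup hxt) hi
  calc dist (S^[i] y) a ≤ dist (S^[N x] y) a := hmono y (N x) i hNx
    _ ≤ dist (S^[N x] y) (S^[N x] x) + dist (S^[N x] x) a := dist_triangle _ _ _
    _ < ε / 2 + ε / 2 := by
        refine add_lt_add_of_le_of_lt ?_ (hN x (N x) le_rfl)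
        calc dist (S^[N x] y) (S^[N x] x) ≤ dist y x := by
              simpa using (iter_lip' hl (N x)).dist_le_mul y x
          _ ≤ ε / 2 := le_of_lt (mem_ball.mp hyx)
    _ = ε := by ring

theorem contractive_family_uniformly_controlled_powers
    {X : Type*} [MetricSpace X] [CompactSpace X]
    (𝒩 : Set C(X, X)) (h𝒩 : IsCompact 𝒩)
    (hlip : ∀ S ∈ 𝒩, LipschitzWith 1 ⇑S)
    (hfix : ∀ S ∈ 𝒩, ∃ a : X, (∀ b : X, S b = b ↔ b = a) ∧
      ∀ x : X, Filter.Tendsto (fun i => (⇑S)^[i] x) Filter.atTop (nhds a)) :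
    ∀ (Sk : ℕ → C(X, X)), (∀ k, Sk k ∈ 𝒩) → ∀ S ∈ 𝒩,
      Filter.Tendsto Sk Filter.atTop (nhds S) →
      ∀ ε > (0 : ℝ), ∃ K : ℕ, ∀ k ≥ K, ∀ (x : X) (i : ℕ),
        dist ((⇑(Sk k))^[i] x) ((⇑S)^[i] x) < ε := by
  intro Sk hSk S hS hT ε hε
  obtain ⟨a, ha, htend⟩ := hfix S hS
  have haa : S a = a := (ha a).mpr rfl
  have hSlip := hlip S hS
  obtain ⟨N, hN⟩ := unif_conv' S.continuous hSlip haa htend (show (0:ℝ) < ε / 4 by linarith)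
  set δ : ℝ := ε / (4 * (N + 1)) with hδdef
  have hδpos : 0 < δ := by positivity
  have hkey : ((N : ℝ) + 1) * δ = ε / 4 := by
    rw [hδdef]; field_simp
  obtain ⟨K, hK⟩ := Metric.tendsto_atTop.mp hT δ hδpos
  refine ⟨K, fun k hk x i => ?_⟩
  have hd0 : dist (Sk k) S < δ := hK k hk
  have hd0' : ∀ y, dist (Sk k y) (S y) ≤ dist (Sk k) S := fun y =>
    ContinuousMap.dist_apply_le_dist y
  have hiter : ∀ (j : ℕ) (y : X), dist ((⇑(Sk k))^[j] y) ((⇑S)^[j] y) ≤ j * dist (Sk k) S :=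
    fun j y => iter_dist' hSlip hd0' j y
  have hd0nn : 0 ≤ dist (Sk k) S := dist_nonneg
  by_cases hiN : i ≤ N
  · calc dist ((⇑(Sk k))^[i] x) ((⇑S)^[i] x) ≤ i * dist (Sk k) S := hiter i x
      _ ≤ N * dist (Sk k) S := by
          exact mul_le_mul_of_nonneg_right (by exact_mod_cast hiN) hd0nn
      _ ≤ N * δ := mul_le_mul_of_nonneg_left (le_of_lt hd0) (Nat.cast_nonneg N)
      _ < ε := by nlinarith [hδpos]
  · push_neg at hiN
    obtain ⟨j, rfl⟩ := Nat.exists_eq_add_of_le (le_of_lt hiN)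
    have hsplit : (⇑(Sk k))^[N + j] x = (⇑(Sk k))^[N] ((⇑(Sk k))^[j] x) := by
      rw [Function.iterate_add_apply]
    set y := (⇑(Sk k))^[j] x with hy
    have h1 : dist ((⇑(Sk k))^[N] y) ((⇑S)^[N] y) ≤ N * δ :=
      le_trans (hiter N y) (mul_le_mul_of_nonneg_left (le_of_lt hd0) (Nat.cast_nonneg N))
    have h2 : dist ((⇑S)^[N] y) a < ε / 4 := hN y N le_rfl
    have h3 : dist ((⇑S)^[N + j] x) a < ε / 4 := hN x (N + j) (Nat.le_add_right _ _)
    have hNδ : (N : ℝ) * δ ≤ ε / 4 := by nlinarith [hδpos]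
    calc dist ((⇑(Sk k))^[N + j] x) ((⇑S)^[N + j] x)
        ≤ dist ((⇑(Sk k))^[N + j] x) a + dist a ((⇑S)^[N + j] x) := dist_triangle _ _ _
      _ = dist ((⇑(Sk k))^[N] y) a + dist ((⇑S)^[N + j] x) a := by
          rw [hsplit, dist_comm a]
      _ ≤ (dist ((⇑(Sk k))^[N] y) ((⇑S)^[N] y) + dist ((⇑S)^[N] y) a)
            + dist ((⇑S)^[N + j] x) a := by
          gcongr; exact dist_triangle _ _ _
      _ < ε := by linarith
end

section
/- Let (X,d) be a compact metric space and 𝒩 a compact subset of C(X,X) in which every map S ∈ 𝒩 is 1-Lipschitz with a unique fixed point α(S) such that Sⁱ(x) → α(S) for all x. Then the convergence Sⁱ(x) → α(S) is uniform in both S ∈ 𝒩 and x ∈ X: for every ε > 0 there exists N such that d(Sⁱ(x), α(S)) < ε for all i ≥ N, all S ∈ 𝒩, and all x ∈ X. -/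
theorem contractive_family_uniform_convergence_to_fixed_points
    {X : Type*} [MetricSpace X] [CompactSpace X]
    (𝒩 : Set C(X, X)) (h𝒩 : IsCompact 𝒩)
    (α : C(X, X) → X)
    (hlip : ∀ S ∈ 𝒩, LipschitzWith 1 ⇑S)
    (hfix : ∀ S ∈ 𝒩, S (α S) = α S)
    (huniq : ∀ S ∈ 𝒩, ∀ b : X, S b = b → b = α S)
    (htend : ∀ S ∈ 𝒩, ∀ x : X,
      Filter.Tendsto (fun i => (⇑S)^[i] x) Filter.atTop (nhds (α S))) :
    ∀ ε > (0 : ℝ), ∃ N : ℕ, ∀ i ≥ N, ∀ S ∈ 𝒩, ∀ x : X,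
      dist ((⇑S)^[i] x) (α S) < ε := by
  intro ε hε
  -- continuity of iterated evaluation
  have hcont : ∀ i : ℕ, Continuous fun p : C(X, X) × X => (⇑p.1)^[i] p.2 := by
    intro i
    induction i with
    | zero => simpa using continuous_snd
    | succ n ih =>
      have : Continuous fun p : C(X, X) × X => p.1 ((⇑p.1)^[n] p.2) :=
        continuous_eval.comp (continuous_fst.prodMk ih)
      simpa [Function.iterate_succ_apply'] using this
  set t : ℕ → Set (C(X, X) × X × X) := fun i =>
    {p | p.1 ∈ 𝒩 ∧ ε ≤ dist ((⇑p.1)^[i] p.2.1) ((⇑p.1)^[i] p.2.2)} with ht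
  have htcl : ∀ i, IsClosed (t i) := by
    intro i
    apply IsClosed.inter (h𝒩.isClosed.preimage continuous_fst)
    show IsClosed {p : C(X, X) × X × X | ε ≤ dist ((⇑p.1)^[i] p.2.1) ((⇑p.1)^[i] p.2.2)}
    apply isClosed_le continuous_const
    apply Continuous.dist
    · exact (hcont i).comp (continuous_fst.prodMk (continuous_snd.fst))
    · exact (hcont i).comp (continuous_fst.prodMk (continuous_snd.snd))
  have hanti : Antitone t := by
    apply antitone_nat_of_succ_le
    intro n p hp
    obtain ⟨hS, hd⟩ := hp
    refine ⟨hS, le_trans hd ?_⟩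
    rw [Function.iterate_succ_apply', Function.iterate_succ_apply']
    simpa using (hlip p.1 hS).dist_le_mul _ _
  have hempty : ((𝒩 ×ˢ (Set.univ : Set (X × X))) ∩ ⋂ i, t i) = ∅ := by
    rw [Set.eq_empty_iff_forall_notMem]
    rintro ⟨S, y, z⟩ ⟨-, hmem⟩
    simp only [Set.mem_iInter, ht, Set.mem_setOf_eq] at hmem
    have hS := (hmem 0).1
    have hlim : Filter.Tendsto (fun i => dist ((⇑S)^[i] y) ((⇑S)^[i] z))
        Filter.atTop (nhds (dist (α S) (α S))) :=
      (htend S hS y).dist (htend S hS z)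
    rw [dist_self] at hlim
    have : ε ≤ 0 := le_of_tendsto_of_tendsto' tendsto_const_nhds hlim fun i => (hmem i).2
    linarith
  obtain ⟨N, hN⟩ := (h𝒩.prod isCompact_univ).elim_directed_family_closed t htcl hempty
    (hanti.directed_ge)
  refine ⟨N, fun i hi S hS x => ?_⟩
  obtain ⟨k, rfl⟩ := Nat.exists_eq_add_of_le hi
  have hfixN : (⇑S)^[N] (α S) = α S := Function.iterate_fixed (hfix S hS) N
  have hkey : ¬ (ε ≤ dist ((⇑S)^[N] ((⇑S)^[k] x)) ((⇑S)^[N] (α S))) := by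
    intro h
    have : (S, (⇑S)^[k] x, α S) ∈ (𝒩 ×ˢ (Set.univ : Set (X × X))) ∩ t N :=
      ⟨⟨hS, trivial⟩, hS, h⟩
    rw [hN] at this
    exact this
  rw [Function.iterate_add_apply]
  calc dist ((⇑S)^[N] ((⇑S)^[k] x)) (α S)
      = dist ((⇑S)^[N] ((⇑S)^[k] x)) ((⇑S)^[N] (α S)) := by rw [hfixN]
    _ < ε := not_le.mp hkey
end
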